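/- arXiv:1112.4379 — 5 statements merged into one kernel-verified Lean document; each statement's English description precedes it below -/
import Mathlib

section
/- Let S be an (nN) × (nN) complex matrix partitioned into N² blocks S_{ij} of size n × n. For 1 ≤ k ≤ N−1 let S̃_k denote the (nk) × (nk) matrix formed from the lower-right k × k block corner of S (blocks S_{ab} with N−k+1 ≤ a,b ≤ N), let s_{ij} denote the block column vector (S_{ij}, S_{i+1,j}, …, S_{Nj})ᵀ and σᵀ_{ij} the block row vector (S_{ij}, S_{i,j+1}, …, S_{iN}). Assume each S̃_k (1 ≤ k ≤ N−1) is invertible. Define β⁽⁰⁾_{ij} = S_{ij} and, for k ≥ 1, β⁽ᵏ⁾_{ij} = S_{ij} − σᵀ_{i,N−k+1} S̃_k⁻¹ s_{N−k+1,j}. Then det(S) = ∏_{k=1}^{N} det(β⁽ᴺ⁻ᵏ⁾_{kk}). -/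
open Matrix

noncomputable section

/-- Assemble an `N × N` block matrix whose `n × n` blocks are given (with 1-based block
indices) by `S i j` for `1 ≤ i, j ≤ N`. -/
def blockMat (N n : ℕ) (S : ℕ → ℕ → Matrix (Fin n) (Fin n) ℂ) :
    Matrix (Fin N × Fin n) (Fin N × Fin n) ℂ :=
  Matrix.of fun p q => S (p.1.val + 1) (q.1.val + 1) p.2 q.2

/-- `S̃ₖ`: the trailing `k × k` block corner of the `N × N` block matrix `S`, consisting of
the blocks `S a b` with `N − k + 1 ≤ a, b ≤ N`. -/
def corner (N n k : ℕ) (S : ℕ → ℕ → Matrix (Fin n) (Fin n) ℂ) :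
    Matrix (Fin k × Fin n) (Fin k × Fin n) ℂ :=
  Matrix.of fun p q => S (N - k + p.1.val + 1) (N - k + q.1.val + 1) p.2 q.2

/-- `σᵀᵢ,ₙ₋ₖ₊₁`: the block row vector `(S i (N−k+1), …, S i N)` (here of block length `k`). -/
def rowVec (N n k : ℕ) (S : ℕ → ℕ → Matrix (Fin n) (Fin n) ℂ) (i : ℕ) :
    Matrix (Fin n) (Fin k × Fin n) ℂ :=
  Matrix.of fun r q => S i (N - k + q.1.val + 1) r q.2

/-- `sₙ₋ₖ₊₁,ⱼ`: the block column vector `(S (N−k+1) j, …, S N j)ᵀ` (here of block length `k`). -/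
def colVec (N n k : ℕ) (S : ℕ → ℕ → Matrix (Fin n) (Fin n) ℂ) (j : ℕ) :
    Matrix (Fin k × Fin n) (Fin n) ℂ :=
  Matrix.of fun p r => S (N - k + p.1.val + 1) j p.2 r

/-- The generalized Schur complements
`β⁽⁰⁾ᵢⱼ = Sᵢⱼ`, `β⁽ᵏ⁾ᵢⱼ = Sᵢⱼ − σᵀᵢ,ₙ₋ₖ₊₁ S̃ₖ⁻¹ sₙ₋ₖ₊₁,ⱼ` for `k ≥ 1`. -/
def beta (N n : ℕ) (S : ℕ → ℕ → Matrix (Fin n) (Fin n) ℂ) (k i j : ℕ) :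
    Matrix (Fin n) (Fin n) ℂ :=
  if k = 0 then S i j
  else S i j - rowVec N n k S i * (corner N n k S)⁻¹ * colVec N n k S j

-- the splitting equiv
def splitE (M n : ℕ) : (Fin n ⊕ (Fin M × Fin n)) ≃ Fin (M + 1) × Fin n where
  toFun := Sum.elim (fun r => (0, r)) (fun p => (p.1.succ, p.2))
  invFun := fun p => Fin.cases (Sum.inl p.2) (fun j => Sum.inr (j, p.2)) p.1
  left_inv := by rintro (r | ⟨p, r⟩) <;> simp
  right_inv := by rintro ⟨i, r⟩; induction i using Fin.cases <;> simp

lemma det_step (n M : ℕ) (S : ℕ → ℕ → Matrix (Fin n) (Fin n) ℂ)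
    (h : IsUnit (corner (M + 1) n M S)) :
    (blockMat (M + 1) n S).det
      = (corner (M + 1) n M S).det * (beta (M + 1) n S M 1 1).det := by
  haveI := h.invertible
  have key : blockMat (M + 1) n S
      = (fromBlocks (S 1 1) (rowVec (M+1) n M S 1) (colVec (M+1) n M S 1)
          (corner (M+1) n M S)).submatrix (splitE M n).symm (splitE M n).symm := by
    have hs : ∀ p q, (fromBlocks (S 1 1) (rowVec (M+1) n M S 1) (colVec (M+1) n M S 1)
          (corner (M+1) n M S)) p q = blockMat (M+1) n S (splitE M n p) (splitE M n q) := by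
      rintro (r | ⟨p, r⟩) (s | ⟨q, s⟩) <;>
        simp [splitE, blockMat, rowVec, colVec, corner, fromBlocks, show M+1-M=1 by omega,
          Nat.add_comm 1]
    ext p q
    rw [submatrix_apply, hs, Equiv.apply_symm_apply, Equiv.apply_symm_apply]
  rw [key, det_submatrix_equiv_self, det_fromBlocks₂₂, invOf_eq_nonsing_inv]
  congr 1
  unfold beta
  rcases Nat.eq_zero_or_pos M with hM | hM
  · subst hM
    simp only [if_pos rfl]
    have : rowVec 1 n 0 S 1 * (corner 1 n 0 S)⁻¹ * colVec 1 n 0 S 1 = 0 := by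
      ext r s
      simp [Matrix.mul_apply]
    rw [this, sub_zero]; simp
  · rw [if_neg (by omega)]

lemma corner_shift (n M k : ℕ) (hk : k ≤ M) (S : ℕ → ℕ → Matrix (Fin n) (Fin n) ℂ) :
    corner M n k (fun i j => S (i+1) (j+1)) = corner (M+1) n k S := by
  ext ⟨p, r⟩ ⟨q, s⟩
  simp only [corner, of_apply]
  rw [show M - k + ↑p + 1 + 1 = M + 1 - k + ↑p + 1 by omega,
    show M - k + ↑q + 1 + 1 = M + 1 - k + ↑q + 1 by omega]

lemma rowVec_shift (n M k i : ℕ) (hk : k ≤ M) (S : ℕ → ℕ → Matrix (Fin n) (Fin n) ℂ) :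
    rowVec M n k (fun i j => S (i+1) (j+1)) i = rowVec (M+1) n k S (i+1) := by
  ext r ⟨q, s⟩
  simp only [rowVec, of_apply]
  rw [show M - k + ↑q + 1 + 1 = M + 1 - k + ↑q + 1 by omega]

lemma colVec_shift (n M k j : ℕ) (hk : k ≤ M) (S : ℕ → ℕ → Matrix (Fin n) (Fin n) ℂ) :
    colVec M n k (fun i j => S (i+1) (j+1)) j = colVec (M+1) n k S (j+1) := by
  ext ⟨p, r⟩ s
  simp only [colVec, of_apply]
  rw [show M - k + ↑p + 1 + 1 = M + 1 - k + ↑p + 1 by omega]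

lemma beta_shift (n M k i j : ℕ) (hk : k ≤ M) (S : ℕ → ℕ → Matrix (Fin n) (Fin n) ℂ) :
    beta M n (fun i j => S (i+1) (j+1)) k i j = beta (M+1) n S k (i+1) (j+1) := by
  unfold beta
  rcases eq_or_ne k 0 with h | h
  · simp [h]
  · rw [if_neg h, if_neg h, corner_shift n M k hk, rowVec_shift n M k i hk,
      colVec_shift n M k j hk]

lemma corner_top (n M : ℕ) (S : ℕ → ℕ → Matrix (Fin n) (Fin n) ℂ) :
    corner (M+1) n M S = blockMat M n (fun i j => S (i+1) (j+1)) := by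
  ext ⟨p, r⟩ ⟨q, s⟩
  simp only [corner, blockMat, of_apply]
  rw [show M + 1 - M + ↑p + 1 = ↑p + 1 + 1 by omega,
    show M + 1 - M + ↑q + 1 = ↑q + 1 + 1 by omega]

lemma main_aux (n : ℕ) : ∀ N (S : ℕ → ℕ → Matrix (Fin n) (Fin n) ℂ),
    (∀ k, 1 ≤ k → k + 1 ≤ N → IsUnit (corner N n k S)) →
    (blockMat N n S).det = ∏ k ∈ Finset.Icc 1 N, (beta N n S (N - k) k k).det := by
  intro N
  induction N with
  | zero =>
    intro S _
    have : IsEmpty (Fin 0 × Fin n) := by infer_instance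
    simp [Matrix.det_isEmpty]
  | succ M ih =>
    intro S hinv
    have hC : IsUnit (corner (M+1) n M S) := by
      rcases Nat.eq_zero_or_pos M with hM | hM
      · subst hM
        rw [Matrix.isUnit_iff_isUnit_det]
        have : IsEmpty (Fin 0 × Fin n) := by infer_instance
        simp [Matrix.det_isEmpty]
      · exact hinv M hM le_rfl
    rw [det_step n M S hC, corner_top]
    set S' : ℕ → ℕ → Matrix (Fin n) (Fin n) ℂ := fun i j => S (i+1) (j+1) with hS'
    have hinv' : ∀ k, 1 ≤ k → k + 1 ≤ M → IsUnit (corner M n k S') := by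
      intro k h1 h2
      rw [hS', corner_shift n M k (by omega) S]
      exact hinv k h1 (by omega)
    rw [ih S' hinv']
    -- rewrite the product via shifting
    have hprod : ∏ k ∈ Finset.Icc 1 M, (beta M n S' (M - k) k k).det
        = ∏ k ∈ Finset.Icc 2 (M+1), (beta (M+1) n S (M+1-k) k k).det := by
      rw [show Finset.Icc 2 (M+1) = (Finset.Icc 1 M).map (addRightEmbedding 1) by
        rw [Finset.map_add_right_Icc], Finset.prod_map]
      refine Finset.prod_congr rfl ?_
      intro k hk
      rw [Finset.mem_Icc] at hk
      simp only [addRightEmbedding_apply]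
      rw [hS', beta_shift n M (M - k) k k (by omega) S,
        show M + 1 - (k+1) = M - k by omega]
    rw [hprod]
    have hsplit : Finset.Icc 1 (M+1) = insert 1 (Finset.Icc 2 (M+1)) := by
      ext x
      simp only [Finset.mem_Icc, Finset.mem_insert]
      omega
    rw [hsplit, Finset.prod_insert (by simp), show M + 1 - 1 = M by omega, mul_comm]

/-- If all the trailing block corners `S̃ₖ` (`1 ≤ k ≤ N − 1`) are invertible, then
`det S = ∏ₖ det (β⁽ᴺ⁻ᵏ⁾ₖₖ)`. -/
theorem det_block_eq_prod_beta (n N : ℕ) (hN : 0 < N)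
    (S : ℕ → ℕ → Matrix (Fin n) (Fin n) ℂ)
    (hinv : ∀ k, 1 ≤ k → k + 1 ≤ N → IsUnit (corner N n k S)) :
    (blockMat N n S).det = ∏ k ∈ Finset.Icc 1 N, (beta N n S (N - k) k k).det := by
  exact main_aux n N S hinv

end
end

section
/- Let S be an (nN) × (nN) complex matrix partitioned into N² blocks S_{ij} of size n × n, and for 1 ≤ k ≤ N−1 let S̃_k be the trailing k × k block corner of S, assumed invertible for all such k. Define β⁽⁰⁾_{ij} = S_{ij} and β⁽ᵏ⁾_{ij} = S_{ij} − σᵀ_{i,N−k+1} S̃_k⁻¹ s_{N−k+1,j} for k ≥ 1, where s_{ij} = (S_{ij}, …, S_{Nj})ᵀ and σᵀ_{ij} = (S_{ij}, …, S_{iN}). Then for 0 ≤ k ≤ N−2, whenever β⁽ᵏ⁾_{N−k,N−k} is invertible, the recursion β⁽ᵏ⁺¹⁾_{ij} = β⁽ᵏ⁾_{ij} − β⁽ᵏ⁾_{i,N−k} (β⁽ᵏ⁾_{N−k,N−k})⁻¹ β⁽ᵏ⁾_{N−k,j} holds for all 1 ≤ i,j ≤ N−k−1. -/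
open Matrix

noncomputable section

/-!
Moving the first block row and column of `S̃ₖ₊₁` to the front exhibits it as the 2 × 2 block
matrix with blocks `S_{N−k,N−k}`, `σᵀ_{N−k,N−k+1}`, `s_{N−k+1,N−k}` and `S̃ₖ`, and likewise splits
the block vectors defining `β⁽ᵏ⁺¹⁾`. Inverting that block matrix through the invertible corner
`S̃ₖ`, whose Schur complement is exactly `β⁽ᵏ⁾_{N−k,N−k}`, turns each entry into a `β⁽ᵏ⁾`, which is
the recursion (the quotient property of Schur complements). For `k = 0` the corner `S̃₀` is
empty, so `β⁽⁰⁾` fits the same formula.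
-/

namespace Matrix

variable {l m n o α : Type*} [Fintype m] [Fintype n] [DecidableEq m] [DecidableEq n] [CommRing α]

/-- Quotient property of Schur complements: eliminating `fromBlocks A B C D` at once is the same
as eliminating `D` first and then its Schur complement `A - B D⁻¹ C`. -/
theorem sub_fromCols_mul_inv_fromBlocks_mul_fromRows (X : Matrix l o α) (P : Matrix l m α)
    (Q : Matrix l n α) (A : Matrix m m α) (B : Matrix m n α) (C : Matrix n m α)
    (D : Matrix n n α) (R : Matrix m o α) (T : Matrix n o α) (hD : IsUnit D)
    (hE : IsUnit (A - B * D⁻¹ * C)) :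
    X - fromCols P Q * (fromBlocks A B C D)⁻¹ * fromRows R T =
      (X - Q * D⁻¹ * T) - (P - Q * D⁻¹ * C) * (A - B * D⁻¹ * C)⁻¹ * (R - B * D⁻¹ * T) := by
  let := hD.invertible
  rw [← invOf_eq_nonsing_inv D] at hE ⊢
  let := hE.invertible
  let := fromBlocks₂₂Invertible A B C D
  rw [← invOf_eq_nonsing_inv, ← invOf_eq_nonsing_inv (A - _), invOf_fromBlocks₂₂_eq,
    Matrix.mul_assoc, fromBlocks_mul_fromRows, fromCols_mul_fromRows]
  simp only [Matrix.mul_add, Matrix.add_mul, Matrix.mul_sub, Matrix.sub_mul,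
    Matrix.neg_mul, Matrix.mul_neg, Matrix.mul_assoc]
  abel

end Matrix

def finSuccProdEquiv (α : Type*) (k : ℕ) : Fin (k + 1) × α ≃ α ⊕ Fin k × α :=
  ((finSuccEquiv k).prodCongr (Equiv.refl α)).trans optionProdEquiv

@[simp] theorem finSuccProdEquiv_symm_inl {α : Type*} (k : ℕ) (a : α) :
    (finSuccProdEquiv α k).symm (Sum.inl a) = (0, a) := by
  simp [finSuccProdEquiv]

@[simp] theorem finSuccProdEquiv_symm_inr {α : Type*} (k : ℕ) (i : Fin k) (a : α) :
    (finSuccProdEquiv α k).symm (Sum.inr (i, a)) = (i.succ, a) := by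
  simp [finSuccProdEquiv]

section BlockRecursion

variable {N n k : ℕ} (S : ℕ → ℕ → Matrix (Fin n) (Fin n) ℂ)

theorem beta_eq_sub (i j : ℕ) :
    beta N n S k i j = S i j - rowVec N n k S i * (corner N n k S)⁻¹ * colVec N n k S j := by
  rcases k with _ | k
  · rw [beta, if_pos rfl, Subsingleton.elim (rowVec N n 0 S i) 0, Matrix.zero_mul,
      Matrix.zero_mul, sub_zero]
  · rfl

theorem corner_succ_submatrix (hk : k + 1 ≤ N) :
    (corner N n (k + 1) S).submatrix (finSuccProdEquiv _ k).symm (finSuccProdEquiv _ k).symm =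
      fromBlocks (S (N - k) (N - k)) (rowVec N n k S (N - k)) (colVec N n k S (N - k))
        (corner N n k S) := by
  ext (u | ⟨a, u⟩) (v | ⟨b, v⟩) <;>
    simp only [corner, rowVec, colVec, submatrix_apply, finSuccProdEquiv_symm_inl,
      finSuccProdEquiv_symm_inr, of_apply, fromBlocks_apply₁₁, fromBlocks_apply₁₂,
      fromBlocks_apply₂₁, fromBlocks_apply₂₂, Fin.val_zero, Fin.val_succ] <;>
    exact congrFun₂ (congrArg₂ S (by omega) (by omega)) u v

theorem rowVec_succ_submatrix (hk : k + 1 ≤ N) (i : ℕ) :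
    (rowVec N n (k + 1) S i).submatrix id (finSuccProdEquiv _ k).symm =
      fromCols (S i (N - k)) (rowVec N n k S i) := by
  ext u (v | ⟨b, v⟩) <;>
    simp only [rowVec, submatrix_apply, id, finSuccProdEquiv_symm_inl,
      finSuccProdEquiv_symm_inr, of_apply, fromCols_apply_inl, fromCols_apply_inr,
      Fin.val_zero, Fin.val_succ] <;>
    exact congrFun₂ (congrArg₂ S (by omega) (by omega)) u v

theorem colVec_succ_submatrix (hk : k + 1 ≤ N) (j : ℕ) :
    (colVec N n (k + 1) S j).submatrix (finSuccProdEquiv _ k).symm id =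
      fromRows (S (N - k) j) (colVec N n k S j) := by
  ext (u | ⟨a, u⟩) v <;>
    simp only [colVec, submatrix_apply, id, finSuccProdEquiv_symm_inl,
      finSuccProdEquiv_symm_inr, of_apply, fromRows_apply_inl, fromRows_apply_inr,
      Fin.val_zero, Fin.val_succ] <;>
    exact congrFun₂ (congrArg₂ S (by omega) (by omega)) u v

end BlockRecursion

theorem beta_recursion_general (n N : ℕ)
    (S : ℕ → ℕ → Matrix (Fin n) (Fin n) ℂ)
    (hinv : ∀ k, 1 ≤ k → k + 1 ≤ N → IsUnit (corner N n k S))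
    (k : ℕ) (hk : k + 2 ≤ N)
    (hβ : IsUnit (beta N n S k (N - k) (N - k)))
    (i j : ℕ) :
    beta N n S (k + 1) i j =
      beta N n S k i j -
        beta N n S k i (N - k) * (beta N n S k (N - k) (N - k))⁻¹ *
          beta N n S k (N - k) j := by
  have hk' : k + 1 ≤ N := by omega
  have hD : IsUnit (corner N n k S) := by
    rcases k.eq_zero_or_pos with rfl | hpos
    · exact isUnit_of_subsingleton _
    · exact hinv k hpos hk'
  have hsplit : rowVec N n (k + 1) S i * (corner N n (k + 1) S)⁻¹ * colVec N n (k + 1) S j =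
      fromCols (S i (N - k)) (rowVec N n k S i) *
        (fromBlocks (S (N - k) (N - k)) (rowVec N n k S (N - k)) (colVec N n k S (N - k))
          (corner N n k S))⁻¹ * fromRows (S (N - k) j) (colVec N n k S j) := by
    rw [← corner_succ_submatrix S hk', ← rowVec_succ_submatrix S hk',
      ← colVec_succ_submatrix S hk', inv_submatrix_equiv, submatrix_mul_equiv,
      submatrix_mul_equiv, submatrix_id_id]
  simp only [beta_eq_sub] at hβ ⊢
  rw [hsplit, sub_fromCols_mul_inv_fromBlocks_mul_fromRows _ _ _ _ _ _ _ _ _ hD hβ]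

/-- The generalized Schur complements `β⁽ᵏ⁾ᵢⱼ` satisfy the recursion
`β⁽ᵏ⁺¹⁾ᵢⱼ = β⁽ᵏ⁾ᵢⱼ − β⁽ᵏ⁾ᵢ,ₙ₋ₖ (β⁽ᵏ⁾ₙ₋ₖ,ₙ₋ₖ)⁻¹ β⁽ᵏ⁾ₙ₋ₖ,ⱼ`. -/
theorem beta_recursion (n N : ℕ)
    (S : ℕ → ℕ → Matrix (Fin n) (Fin n) ℂ)
    (hinv : ∀ k, 1 ≤ k → k + 1 ≤ N → IsUnit (corner N n k S))
    (k : ℕ) (hk : k + 2 ≤ N)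
    (hβ : IsUnit (beta N n S k (N - k) (N - k)))
    (i j : ℕ) (hi1 : 1 ≤ i) (hi2 : i ≤ N - k - 1) (hj1 : 1 ≤ j) (hj2 : j ≤ N - k - 1) :
    beta N n S (k + 1) i j =
      beta N n S k i j -
        beta N n S k i (N - k) * (beta N n S k (N - k) (N - k))⁻¹ *
          beta N n S k (N - k) j :=
  beta_recursion_general n N S hinv k hk hβ i j

end
end

section
/- Let S be a 2N × 2N complex matrix partitioned into four N × N blocks S₁₁, S₁₂, S₂₁, S₂₂ with S₂₂ invertible. If S₁₂ S₂₂ = −S₂₂ S₁₂ (the blocks anti-commute), then det(S) = det(S₂₂ S₁₁ + S₁₂ S₂₁). -/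
open Matrix

noncomputable section

/-- For a `2N × 2N` complex matrix partitioned into four `N × N` blocks with `S₂₂`
invertible, if `S₁₂` anti-commutes with `S₂₂`, then `det S = det (S₂₂ S₁₁ + S₁₂ S₂₁)`. -/
theorem det_fromBlocks_of_anticomm₁₂ (N : ℕ)
    (S11 S12 S21 S22 : Matrix (Fin N) (Fin N) ℂ) (h22 : IsUnit S22)
    (hanticomm : S12 * S22 = -(S22 * S12)) :
    (Matrix.fromBlocks S11 S12 S21 S22).det = (S22 * S11 + S12 * S21).det := by
  have : Invertible S22 := h22.invertible
  rw [Matrix.det_fromBlocks₂₂, ← Matrix.det_mul]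
  congr 1
  have hkey : S22 * S12 * ⅟S22 = -S12 := by
    have h : S22 * S12 = -(S12 * S22) := by rw [hanticomm, neg_neg]
    rw [h]
    simp [mul_assoc]
  calc S22 * (S11 - S12 * ⅟S22 * S21)
      = S22 * S11 - (S22 * S12 * ⅟S22) * S21 := by noncomm_ring
    _ = S22 * S11 + S12 * S21 := by rw [hkey]; noncomm_ring

end
end

section
/- Let S be an (nN) × (nN) complex matrix partitioned into N² blocks S_{ij} of size n × n, with all trailing corner block matrices S̃_k (1 ≤ k ≤ N−1) invertible, and let U be the block lower unitriangular matrix with sub-diagonal block columns u_{k+1,k} = −S̃_{N−k}⁻¹ s_{k+1,k}. Then for each 1 ≤ k ≤ N the k-th diagonal block of SU equals S_{kk} − σᵀ_{k,k+1} S̃_{N−k}⁻¹ s_{k+1,k}, i.e. the Schür complement of the trailing (N−k+1) × (N−k+1) block corner S̃_{N−k+1} with respect to its leading block S_{kk} (for k = N, this diagonal block is S_{NN}). -/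
open Matrix

noncomputable section

/-- `u_{k+1,k} = −S̃_{N−k}⁻¹ s_{k+1,k}`: the `k`-th sub-diagonal block column of the
auxiliary matrix `U` (1-based block column index `k`). -/
def uVec (N n : ℕ) (S : ℕ → ℕ → Matrix (Fin n) (Fin n) ℂ) (k : ℕ) :
    Matrix (Fin (N - k) × Fin n) (Fin n) ℂ :=
  -((corner N n (N - k) S)⁻¹ * colVec N n (N - k) S k)

/-- The blocks of the block lower unitriangular auxiliary matrix `U`: identity blocks on
the diagonal, zero blocks above it, and below the diagonal the blocks determined by
`u_{j+1,j} = −S̃_{N−j}⁻¹ s_{j+1,j}` (1-based block indices `i, j`). -/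
def Ublock (N n : ℕ) (S : ℕ → ℕ → Matrix (Fin n) (Fin n) ℂ) (i j : ℕ) :
    Matrix (Fin n) (Fin n) ℂ :=
  if i = j then 1
  else if h : j < i ∧ i ≤ N then
    Matrix.of fun r c => uVec N n S j (⟨i - j - 1, by omega⟩, r) c
  else 0


/-- With all trailing block corners `S̃ₖ` (`1 ≤ k ≤ N − 1`) invertible, the `k`-th diagonal
block of `S U` is the Schur complement `S k k − σᵀ_{k,k+1} S̃_{N−k}⁻¹ s_{k+1,k}`
(for the last block, `k = N`, this is just `S N N`). -/
theorem mul_U_diagonal_block (n N : ℕ)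
    (S : ℕ → ℕ → Matrix (Fin n) (Fin n) ℂ)
    (hinv : ∀ k, 1 ≤ k → k + 1 ≤ N → IsUnit (corner N n k S)) :
    ∀ (k : Fin N) (r c : Fin n),
      (blockMat N n S * blockMat N n (Ublock N n S)) (k, r) (k, c) =
        (S (k.val + 1) (k.val + 1) -
            rowVec N n (N - (k.val + 1)) S (k.val + 1) *
              (corner N n (N - (k.val + 1)) S)⁻¹ *
                colVec N n (N - (k.val + 1)) S (k.val + 1)) r c := by
  intro k r c
  have hk : (k : ℕ) < N := k.isLt
  set m := N - (k.val + 1) with hm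
  set M := (corner N n m S)⁻¹ * colVec N n m S (k.val + 1) with hM
  set f : ℕ → ℂ := fun j => ∑ s : Fin n,
      S (k.val + 1) (j + 1) r s * Ublock N n S (j + 1) (k.val + 1) s c with hf
  set g : ℕ → ℂ := fun q => ∑ t : Fin n,
      S (k.val + 1) (k.val + 1 + q + 1) r t *
        (if h : q < m then M (⟨q, h⟩, t) c else 0) with hg
  have hL : (blockMat N n S * blockMat N n (Ublock N n S)) (k, r) (k, c)
      = ∑ j ∈ Finset.range N, f j := by
    rw [Matrix.mul_apply, Fintype.sum_prod_type, ← Fin.sum_univ_eq_sum_range]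
    rfl
  have hsplit : ∑ j ∈ Finset.range N, f j
      = f k.val + ∑ q ∈ Finset.range m, f (k.val + 1 + q) := by
    rw [Finset.range_eq_Ico, ← Finset.sum_Ico_consecutive f (Nat.zero_le (k.val+1)) hk,
      ← Finset.range_eq_Ico, Finset.sum_range_succ, Finset.sum_Ico_eq_sum_range]
    have h0 : ∑ j ∈ Finset.range k.val, f j = 0 := by
      apply Finset.sum_eq_zero
      intro j hj
      simp only [Finset.mem_range] at hj
      have h1 : Ublock N n S (j + 1) (k.val + 1) = 0 := by
        unfold Ublock
        rw [if_neg (by omega), dif_neg (by omega)]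
      simp [hf, h1]
    have hmm : N - (k.val + 1) = m := rfl
    rw [h0, hmm]
    ring
  have hterm : ∀ q ∈ Finset.range m, f (k.val + 1 + q) = -g q := by
    intro q hq
    simp only [Finset.mem_range] at hq
    have h1 : Ublock N n S (k.val + 1 + q + 1) (k.val + 1)
        = Matrix.of fun rr cc => uVec N n S (k.val + 1)
            (⟨k.val + 1 + q + 1 - (k.val + 1) - 1, by omega⟩, rr) cc := by
      unfold Ublock
      rw [if_neg (by omega), dif_pos (by omega)]
    have huv : uVec N n S (k.val + 1) = -M := by rw [hM, uVec]
    simp only [hf, hg, h1, Matrix.of_apply, huv, Matrix.neg_apply, dif_pos hq,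
      mul_neg, ← Finset.sum_neg_distrib]
    apply Finset.sum_congr rfl
    intro s _
    have : (⟨k.val + 1 + q + 1 - (k.val + 1) - 1, by omega⟩ : Fin m)
        = ⟨q, hq⟩ := by simp only [Fin.mk.injEq]; omega
    rw [this]
  have hdiag : f k.val = S (k.val + 1) (k.val + 1) r c := by
    have h1 : Ublock N n S (k.val + 1) (k.val + 1) = 1 := by
      unfold Ublock; rw [if_pos rfl]
    simp only [hf, h1, Matrix.one_apply, mul_ite, mul_one, mul_zero,
      Finset.sum_ite_eq', Finset.mem_univ, if_true]
  have hNm : N - m = k.val + 1 := by omega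
  have hR : (S (k.val + 1) (k.val + 1) -
      rowVec N n m S (k.val + 1) * (corner N n m S)⁻¹ * colVec N n m S (k.val + 1)) r c
      = S (k.val + 1) (k.val + 1) r c - ∑ q : Fin m, g q.val := by
    rw [Matrix.mul_assoc, ← hM, Matrix.sub_apply, Matrix.mul_apply, Fintype.sum_prod_type]
    congr 1
    apply Finset.sum_congr rfl
    intro q _
    simp only [hg, dif_pos q.isLt]
    apply Finset.sum_congr rfl
    intro t _
    simp only [rowVec, Matrix.of_apply, hNm, Fin.eta]
  rw [hL, hsplit, Finset.sum_congr rfl hterm, hdiag, hR,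
    Fin.sum_univ_eq_sum_range g m, Finset.sum_neg_distrib, ← sub_eq_add_neg]

end
end

section
/- Let E, μ, M, k_x, k_y, k_z be real numbers with E_k = √(k_x² + k_y² + k_z² + M²), let Δ be a complex number, assume (E − μ)² ≠ E_k², and let k̸ = E γ⁰ − k_x γ¹ − k_y γ² − k_z γ³ with γ⁰, γ¹, γ², γ³ the 4 × 4 Dirac matrices in the Dirac representation. Then det( k̸ + μ γ⁰ − M·I₄ − |Δ|² · ((E − μ)² − E_k²)⁻¹ · (k̸ − μ γ⁰ − M·I₄) ) = ( (E² − (E_k + μ)² − |Δ|²)² (E² − (E_k − μ)² − |Δ|²)² ) / ( (E − E_k − μ)² (E + E_k − μ)² ). -/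
/-!
Write `r = |Δ|² / ((E − μ)² − E_k²)`. The block is a combination
`(E + μ − r(E − μ)) γ⁰ − (1 − r) k⃗·γ⃗ − (1 − r) M`, and every matrix `a γ⁰ − b⃗·γ⃗ − m` has
determinant `(a² − |b⃗|² − m²)²`, so the determinant is the square of
`(E + μ − r(E − μ))² − (1 − r)² E_k²`. Clearing the denominator `(E − μ)² − E_k²`, this
scalar factors into the two quasiparticle dispersions `E² − (E_k ± μ)² − |Δ|²`.
-/

open Matrix

noncomputable section

/-- `γ⁰ = diag(I₂, −I₂)` in the Dirac representation. -/
def gamma0 : Matrix (Fin 4) (Fin 4) ℂ :=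
  !![1, 0, 0, 0; 0, 1, 0, 0; 0, 0, -1, 0; 0, 0, 0, -1]

/-- `γ¹ = [[0, σ₁], [−σ₁, 0]]` with `σ₁ = [[0,1],[1,0]]`. -/
def gamma1 : Matrix (Fin 4) (Fin 4) ℂ :=
  !![0, 0, 0, 1; 0, 0, 1, 0; 0, -1, 0, 0; -1, 0, 0, 0]

/-- `γ² = [[0, σ₂], [−σ₂, 0]]` with `σ₂ = [[0,−i],[i,0]]`. -/
def gamma2 : Matrix (Fin 4) (Fin 4) ℂ :=
  !![0, 0, 0, -Complex.I; 0, 0, Complex.I, 0;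
     0, Complex.I, 0, 0; -Complex.I, 0, 0, 0]

/-- `γ³ = [[0, σ₃], [−σ₃, 0]]` with `σ₃ = [[1,0],[0,−1]]`. -/
def gamma3 : Matrix (Fin 4) (Fin 4) ℂ :=
  !![0, 0, 1, 0; 0, 0, 0, -1; -1, 0, 0, 0; 0, 1, 0, 0]

/-- `k̸ = E γ⁰ − k_x γ¹ − k_y γ² − k_z γ³`. -/
def slashK (E kx ky kz : ℝ) : Matrix (Fin 4) (Fin 4) ℂ :=
  (E : ℂ) • gamma0 - (kx : ℂ) • gamma1 - (ky : ℂ) • gamma2 - (kz : ℂ) • gamma3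

-- With `c = i b₂` this is the entrywise form of `a γ⁰ − b₁ γ¹ − b₂ γ² − b₃ γ³ − m`.
theorem det_fin_four_dirac {R : Type*} [CommRing R] (a b₁ c b₃ m : R) :
    det !![a - m, 0, -b₃, -b₁ + c;
           0, a - m, -b₁ - c, b₃;
           b₃, b₁ - c, -a - m, 0;
           b₁ + c, -b₃, 0, -a - m] =
      (a ^ 2 - b₁ ^ 2 + c ^ 2 - b₃ ^ 2 - m ^ 2) ^ 2 := by
  rw [det_succ_row_zero, Fin.sum_univ_four]
  simp [det_fin_three, Fin.succAbove]
  ring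

theorem det_smul_gamma_sub (a b₁ b₂ b₃ m : ℂ) :
    (a • gamma0 - b₁ • gamma1 - b₂ • gamma2 - b₃ • gamma3 - m • (1 : Matrix (Fin 4) (Fin 4) ℂ)).det =
      (a ^ 2 - b₁ ^ 2 - b₂ ^ 2 - b₃ ^ 2 - m ^ 2) ^ 2 := by
  have hentries :
      a • gamma0 - b₁ • gamma1 - b₂ • gamma2 - b₃ • gamma3 - m • (1 : Matrix (Fin 4) (Fin 4) ℂ) =
        !![a - m, 0, -b₃, -b₁ + Complex.I * b₂;
           0, a - m, -b₁ - Complex.I * b₂, b₃;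
           b₃, b₁ - Complex.I * b₂, -a - m, 0;
           b₁ + Complex.I * b₂, -b₃, 0, -a - m] := by
    ext i j
    fin_cases i <;> fin_cases j <;> simp [gamma0, gamma1, gamma2, gamma3, one_apply] <;> ring
  rw [hentries, det_fin_four_dirac, mul_pow, Complex.I_sq]
  ring

theorem slashK_add_sub_smul (E μ M kx ky kz : ℝ) (r : ℂ) :
    slashK E kx ky kz + (μ : ℂ) • gamma0 - (M : ℂ) • 1 -
        r • (slashK E kx ky kz - (μ : ℂ) • gamma0 - (M : ℂ) • 1) =
      (E + μ - r * (E - μ) : ℂ) • gamma0 - ((1 - r) * kx) • gamma1 - ((1 - r) * ky) • gamma2 -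
        ((1 - r) * kz) • gamma3 - ((1 - r) * M) • 1 := by
  unfold slashK
  module

theorem det_slashK_add_sub_smul (E μ M kx ky kz Ek : ℝ)
    (hEk : Ek ^ 2 = kx ^ 2 + ky ^ 2 + kz ^ 2 + M ^ 2) (r : ℂ) :
    (slashK E kx ky kz + (μ : ℂ) • gamma0 - (M : ℂ) • 1 -
        r • (slashK E kx ky kz - (μ : ℂ) • gamma0 - (M : ℂ) • 1)).det =
      ((E + μ - r * (E - μ)) ^ 2 - (1 - r) ^ 2 * Ek ^ 2) ^ 2 := by
  have hEk' : (Ek : ℂ) ^ 2 = (kx : ℂ) ^ 2 + (ky : ℂ) ^ 2 + (kz : ℂ) ^ 2 + (M : ℂ) ^ 2 := by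
    exact_mod_cast congrArg ((↑) : ℝ → ℂ) hEk
  rw [slashK_add_sub_smul, det_smul_gamma_sub, hEk']
  ring

theorem dispersion_factorization {K : Type*} [Field K] (E μ Ek d : K) (h₁ : E - Ek - μ ≠ 0)
    (h₂ : E + Ek - μ ≠ 0) :
    (E + μ - d / ((E - Ek - μ) * (E + Ek - μ)) * (E - μ)) ^ 2 -
        (1 - d / ((E - Ek - μ) * (E + Ek - μ))) ^ 2 * Ek ^ 2 =
      (E ^ 2 - (Ek + μ) ^ 2 - d) * (E ^ 2 - (Ek - μ) ^ 2 - d) /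
        ((E - Ek - μ) * (E + Ek - μ)) := by
  field_simp
  ring

/-- The determinant of the gapped block
`k̸ + μγ⁰ − M·I₄ − |Δ|²((E−μ)² − E_k²)⁻¹ (k̸ − μγ⁰ − M·I₄)` equals
`(E² − (E_k+μ)² − |Δ|²)² (E² − (E_k−μ)² − |Δ|²)² / ((E − E_k − μ)² (E + E_k − μ)²)`. -/
theorem det_gapped_block (E μ M kx ky kz Ek : ℝ) (Δ : ℂ)
    (hEk : Ek = Real.sqrt (kx ^ 2 + ky ^ 2 + kz ^ 2 + M ^ 2))
    (h : (E - μ) ^ 2 ≠ Ek ^ 2) :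
    (slashK E kx ky kz + (μ : ℂ) • gamma0 - (M : ℂ) • 1 -
        (((Complex.normSq Δ : ℂ)) * ((((E - μ) ^ 2 - Ek ^ 2 : ℝ) : ℂ))⁻¹) •
          (slashK E kx ky kz - (μ : ℂ) • gamma0 - (M : ℂ) • 1)).det =
      (((E : ℂ) ^ 2 - ((Ek : ℂ) + (μ : ℂ)) ^ 2 - (Complex.normSq Δ : ℂ)) ^ 2 *
          ((E : ℂ) ^ 2 - ((Ek : ℂ) - (μ : ℂ)) ^ 2 - (Complex.normSq Δ : ℂ)) ^ 2) /
        (((E : ℂ) - (Ek : ℂ) - (μ : ℂ)) ^ 2 * ((E : ℂ) + (Ek : ℂ) - (μ : ℂ)) ^ 2) := by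
  have hEk_sq : Ek ^ 2 = kx ^ 2 + ky ^ 2 + kz ^ 2 + M ^ 2 := by
    rw [hEk, Real.sq_sqrt (by positivity)]
  have hfactor :
      (((E - μ) ^ 2 - Ek ^ 2 : ℝ) : ℂ) = ((E : ℂ) - Ek - μ) * ((E : ℂ) + Ek - μ) := by
    push_cast
    ring
  have hne : ((E : ℂ) - Ek - μ) * ((E : ℂ) + Ek - μ) ≠ 0 := by
    rw [← hfactor]
    exact_mod_cast sub_ne_zero.mpr h
  rw [det_slashK_add_sub_smul E μ M kx ky kz Ek hEk_sq, hfactor, ← div_eq_mul_inv,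
    dispersion_factorization _ _ _ _ (left_ne_zero_of_mul hne) (right_ne_zero_of_mul hne),
    div_pow, mul_pow, mul_pow]

end
end
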